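/- Let Ω ⊂ ℂⁿ be a bounded domain, z ∈ Ω, X a holomorphic tangent vector, and S_{z,X} = {f ∈ A²(Ω) : f(z)=0, Xf(z)=0}. Then the orthogonal complement of S_{z,X} in A²(Ω) has complex dimension 2, and {b_z, h₁} is an orthonormal basis of it, where b_z = K_Ω(·,z)/√K_Ω(z) and h₁ = P_{z,X}(b_z c_{z,X})/‖P_{z,X}(b_z c_{z,X})‖_{L²(Ω)}. -/

import Mathlib

open MeasureTheory Complex ComplexConjugate Metric

noncomputable section

abbrev Cn (n : ℕ) := EuclideanSpace ℂ (Fin n)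

instance {n : ℕ} : MeasurableSpace (Cn n) := WithLp.measurableSpace 2 (Fin n → ℂ)
instance {n : ℕ} : BorelSpace (Cn n) := PiLp.borelSpace 2
instance {n : ℕ} : MeasureSpace (Cn n) := ⟨(volume : Measure (Fin n → ℂ)).map (WithLp.toLp 2)⟩

/-- Membership in the Bergman space `A²(Ω)`: holomorphic on `Ω` and square-integrable. -/
def A2mem {n : ℕ} (Ω : Set (Cn n)) (f : Cn n → ℂ) : Prop :=
  DifferentiableOn ℂ f Ω ∧ MeasureTheory.MemLp f 2 (volume.restrict Ω)

/-- The `L²(Ω)` norm of a function. -/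
def L2norm {n : ℕ} (Ω : Set (Cn n)) (f : Cn n → ℂ) : ℝ :=
  Real.sqrt (∫ ζ in Ω, ‖f ζ‖ ^ 2)

/-- `K` is the Bergman kernel of `Ω`: for each `z ∈ Ω`, `K (·, z) ∈ A²(Ω)` and `K`
has the reproducing property. -/
def IsBergmanKernel {n : ℕ} (Ω : Set (Cn n)) (K : Cn n → Cn n → ℂ) : Prop :=
  (∀ z ∈ Ω, A2mem Ω (fun ζ => K ζ z)) ∧
  (∀ f, A2mem Ω f → ∀ z ∈ Ω, f z = ∫ ζ in Ω, f ζ * conj (K ζ z))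

/-- The normalized Bergman kernel `b_z = K(·,z)/√K(z,z)`. -/
def bz {n : ℕ} (K : Cn n → Cn n → ℂ) (z ζ : Cn n) : ℂ :=
  K ζ z / (Real.sqrt (K z z).re : ℂ)

/-- `X̄_z K(ζ,z) = Σ_j conj X_j ∂K(ζ,z)/∂z̄_j`, computed as the conjugate of the
complex directional derivative of the holomorphic function `w ↦ conj (K ζ w)`. -/
def barDeriv {n : ℕ} (K : Cn n → Cn n → ℂ) (X z ζ : Cn n) : ℂ :=
  conj (fderiv ℂ (fun w => conj (K ζ w)) z X)

/-- The Bergman metric `B_Ω(z;X)`. -/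
def BergmanMetric {n : ℕ} (Ω : Set (Cn n)) (K : Cn n → Cn n → ℂ) (z X : Cn n) : ℝ :=
  (Real.sqrt (K z z).re)⁻¹ *
    sSup {r | ∃ f : Cn n → ℂ, DifferentiableOn ℂ f Ω ∧ f z = 0 ∧
      (∫ ζ in Ω, ‖f ζ‖ ^ 2) ≤ 1 ∧ r = ‖fderiv ℂ f z X‖}

/-- The Carathéodory metric `C_Ω(z;X)`. -/
def CaraMetric {n : ℕ} (Ω : Set (Cn n)) (z X : Cn n) : ℝ :=
  sSup {r | ∃ f : Cn n → ℂ, DifferentiableOn ℂ f Ω ∧ f z = 0 ∧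
      (∀ ζ ∈ Ω, ‖f ζ‖ < 1) ∧ r = ‖fderiv ℂ f z X‖}

/-- A Carathéodory extremal function `c_{z,X}`. -/
def IsCaraExtremal {n : ℕ} (Ω : Set (Cn n)) (z X : Cn n) (c : Cn n → ℂ) : Prop :=
  DifferentiableOn ℂ c Ω ∧ c z = 0 ∧ (∀ ζ ∈ Ω, ‖c ζ‖ < 1) ∧
    fderiv ℂ c z X = (CaraMetric Ω z X : ℂ)

/-- The subspace `S_{z,X} = {f ∈ A²(Ω) : f(z)=0, Xf(z)=0}`. -/
def SzX {n : ℕ} (Ω : Set (Cn n)) (z X : Cn n) (f : Cn n → ℂ) : Prop :=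
  A2mem Ω f ∧ f z = 0 ∧ fderiv ℂ f z X = 0

/-- `p = P_{z,X} g`: the orthogonal projection of `g` onto `S_{z,X}^⊥`,
characterized by `p ∈ A²(Ω)`, `p ⊥ S_{z,X}` and `g - p ∈ S_{z,X}`. -/
def IsProj {n : ℕ} (Ω : Set (Cn n)) (z X : Cn n) (g p : Cn n → ℂ) : Prop :=
  A2mem Ω p ∧ (∀ h, SzX Ω z X h → (∫ ζ in Ω, h ζ * conj (p ζ)) = 0) ∧
    SzX Ω z X (g - p)

/-- The (unit-norm) Bergman extremal function `b_{z,X}` with `X b_{z,X}(z) > 0`. -/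
def IsBergmanExtremal {n : ℕ} (Ω : Set (Cn n)) (K : Cn n → Cn n → ℂ) (z X : Cn n)
    (b : Cn n → ℂ) : Prop :=
  A2mem Ω b ∧ b z = 0 ∧ L2norm Ω b = 1 ∧
    fderiv ℂ b z X = ((Real.sqrt (K z z).re * BergmanMetric Ω K z X : ℝ) : ℂ) ∧
    ∀ f : Cn n → ℂ, DifferentiableOn ℂ f Ω → f z = 0 → (∫ ζ in Ω, ‖f ζ‖ ^ 2) ≤ 1 →
      ‖fderiv ℂ f z X‖ ≤ Real.sqrt (K z z).re * BergmanMetric Ω K z X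


/-!
By the reproducing property, `⟪f, b_z⟫ = f(z)/√K(z,z)`, so `b_z` is a unit vector orthogonal to
`S_{z,X}`. Since `c(z) = 0`, the projection `p` of `b_z c` satisfies `p(z) = 0` and
`Xp(z) = b_z(z) · Xc(z) = √K(z,z) · C_Ω(z;X)`, which is nonzero because the Carathéodory metric
of a bounded domain is positive (test against `ζ ↦ ⟪X, ζ - z⟫` suitably scaled). Hence `p ≠ 0`,
`h₁ = p/‖p‖` is a unit vector orthogonal to `S_{z,X}` and to `b_z`. Finally `S_{z,X}` is the kernel
of `f ↦ (f(z), Xf(z))`, so for `f ⊥ S_{z,X}` one can subtract `a b_z + b h₁` to land in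
`S_{z,X} ∩ S_{z,X}^⊥ = 0`.
-/

section MulConj

variable {α : Type*} [MeasurableSpace α] {μ : Measure α}

lemma integrable_mul_conj {f g : α → ℂ} (hf : MemLp f 2 μ) (hg : MemLp g 2 μ) :
    Integrable (fun x => f x * conj (g x)) μ := by
  refine (L2.integrable_inner (𝕜 := ℂ) (hg.toLp g) (hf.toLp f)).congr ?_
  filter_upwards [hg.coeFn_toLp, hf.coeFn_toLp] with x hgx hfx
  simp [hgx, hfx, RCLike.inner_apply]

lemma integral_mul_conj_eq_conj (f g : α → ℂ) :
    ∫ x, f x * conj (g x) ∂μ = conj (∫ x, g x * conj (f x) ∂μ) := by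
  rw [← integral_conj]
  simp only [map_mul, conj_conj, mul_comm]

lemma integral_mul_conj_self (f : α → ℂ) :
    ∫ x, f x * conj (f x) ∂μ = ((∫ x, ‖f x‖ ^ 2 ∂μ : ℝ) : ℂ) := by
  simp only [mul_conj', ← ofReal_pow]
  exact integral_ofReal

lemma integral_mul_conj_div_ofReal (f g : α → ℂ) (r : ℝ) :
    ∫ x, f x * conj (g x / r) ∂μ = (∫ x, f x * conj (g x) ∂μ) / r := by
  simp only [map_div₀, conj_ofReal, ← integral_div, mul_div_assoc]

lemma integral_sub_mul_sub_mul_mul_conj {f g h u : α → ℂ} (hf : MemLp f 2 μ)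
    (hg : MemLp g 2 μ) (hh : MemLp h 2 μ) (hu : MemLp u 2 μ) (a b : ℂ) :
    ∫ x, (f x - a * g x - b * h x) * conj (u x) ∂μ =
      (∫ x, f x * conj (u x) ∂μ) - a * (∫ x, g x * conj (u x) ∂μ)
        - b * ∫ x, h x * conj (u x) ∂μ := by
  have hgu := (integrable_mul_conj hg hu).const_mul a
  have hhu := (integrable_mul_conj hh hu).const_mul b
  simp only [sub_mul, mul_assoc]
  rw [integral_sub ((integrable_mul_conj hf hu).sub' hgu) hhu,
    integral_sub (integrable_mul_conj hf hu) hgu, integral_const_mul, integral_const_mul]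

end MulConj

instance {n : ℕ} : Measure.IsOpenPosMeasure (volume : Measure (Cn n)) :=
  (PiLp.homeomorph 2 (fun _ : Fin n => ℂ)).symm.continuous.isOpenPosMeasure_map
    (PiLp.homeomorph 2 (fun _ : Fin n => ℂ)).symm.surjective

instance {n : ℕ} : IsFiniteMeasureOnCompacts (volume : Measure (Cn n)) :=
  Measure.IsFiniteMeasureOnCompacts.map (volume : Measure (Fin n → ℂ))
    (PiLp.homeomorph 2 (fun _ : Fin n => ℂ)).symm

namespace A2mem

variable {n : ℕ} {Ω : Set (Cn n)} {f g : Cn n → ℂ}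

lemma const_mul (hf : A2mem Ω f) (a : ℂ) : A2mem Ω (fun ζ => a * f ζ) :=
  ⟨hf.1.const_mul a, hf.2.const_mul a⟩

lemma div_const (hf : A2mem Ω f) (a : ℂ) : A2mem Ω (fun ζ => f ζ / a) := by
  simpa only [div_eq_inv_mul] using hf.const_mul a⁻¹

lemma sub (hf : A2mem Ω f) (hg : A2mem Ω g) : A2mem Ω (fun ζ => f ζ - g ζ) :=
  ⟨hf.1.sub hg.1, hf.2.sub hg.2⟩

lemma differentiableAt (hf : A2mem Ω f) (hΩo : IsOpen Ω) {z : Cn n} (hz : z ∈ Ω) :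
    DifferentiableAt ℂ f z :=
  hf.1.differentiableAt (hΩo.mem_nhds hz)

lemma eqOn_zero_of_integral_mul_conj_self_eq_zero (hΩo : IsOpen Ω) (hf : A2mem Ω f)
    (h : ∫ ζ in Ω, f ζ * conj (f ζ) = 0) : Set.EqOn f 0 Ω := by
  rw [integral_mul_conj_self, ofReal_eq_zero,
    integral_eq_zero_iff_of_nonneg (fun _ => by positivity)
      ((memLp_two_iff_integrable_sq_norm hf.2.1).mp hf.2)] at h
  refine (volume : Measure (Cn n)).eqOn_open_of_ae_eq ?_ hΩo hf.1.continuousOn continuousOn_const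
  filter_upwards [h] with ζ hζ
  simpa using hζ

lemma integral_norm_sq_pos_of_fderiv_ne_zero (hΩo : IsOpen Ω) (hf : A2mem Ω f) {z X : Cn n} (hz : z ∈ Ω)
    (hfX : fderiv ℂ f z X ≠ 0) : 0 < ∫ ζ in Ω, ‖f ζ‖ ^ 2 := by
  refine (integral_nonneg fun _ => by positivity).lt_of_ne' fun h => hfX ?_
  have hf0 : f =ᶠ[nhds z] 0 := Filter.eventually_of_mem (hΩo.mem_nhds hz)
    (hf.eqOn_zero_of_integral_mul_conj_self_eq_zero hΩo (by rw [integral_mul_conj_self, h]; simp))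
  rw [hf0.fderiv_eq, fderiv_zero]
  rfl

end A2mem

lemma integral_div_L2norm_mul_conj_self {n : ℕ} {Ω : Set (Cn n)} {f : Cn n → ℂ}
    (hf : 0 < ∫ ζ in Ω, ‖f ζ‖ ^ 2) :
    ∫ ζ in Ω, f ζ / (L2norm Ω f : ℂ) * conj (f ζ / (L2norm Ω f : ℂ)) = 1 := by
  have hsq : (L2norm Ω f : ℂ) * L2norm Ω f = ((∫ ζ in Ω, ‖f ζ‖ ^ 2 : ℝ) : ℂ) := by
    rw [← ofReal_mul, L2norm, Real.mul_self_sqrt hf.le]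
  simp only [integral_mul_conj_div_ofReal, div_mul_eq_mul_div, integral_div,
    integral_mul_conj_self, div_div, hsq]
  exact div_self (ofReal_ne_zero.mpr hf.ne')

namespace IsBergmanKernel

variable {n : ℕ} {Ω : Set (Cn n)} {K : Cn n → Cn n → ℂ} {z : Cn n}

lemma apply_self_eq_integral (hK : IsBergmanKernel Ω K) (hz : z ∈ Ω) :
    K z z = ((∫ ζ in Ω, ‖K ζ z‖ ^ 2 : ℝ) : ℂ) := by
  rw [hK.2 _ (hK.1 z hz) z hz, integral_mul_conj_self]

lemma re_apply_self_pos (hK : IsBergmanKernel Ω K) (hΩo : IsOpen Ω)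
    (hΩb : Bornology.IsBounded Ω) (hz : z ∈ Ω) : 0 < (K z z).re := by
  have : IsFiniteMeasure (volume.restrict Ω) := isFiniteMeasure_restrict.mpr hΩb.measure_lt_top.ne
  have hKz_ne : Set.EqOn (fun ζ => K ζ z) 0 Ω → False := fun h0 => by
    have h1 := hK.2 (fun _ => 1) ⟨differentiableOn_const 1, memLp_const 1⟩ z hz
    rw [setIntegral_congr_fun hΩo.measurableSet (g := 0) fun ζ hζ => by simp [h0 hζ]] at h1
    simp at h1
  rw [hK.apply_self_eq_integral hz, ofReal_re]
  refine (integral_nonneg fun _ => by positivity).lt_of_ne' fun h => hKz_ne ?_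
  refine (hK.1 z hz).eqOn_zero_of_integral_mul_conj_self_eq_zero hΩo ?_
  rw [integral_mul_conj_self, h, ofReal_zero]

lemma a2mem_bz (hK : IsBergmanKernel Ω K) (hz : z ∈ Ω) : A2mem Ω (bz K z) :=
  (hK.1 z hz).div_const _

lemma integral_mul_conj_bz (hK : IsBergmanKernel Ω K) (hz : z ∈ Ω) {f : Cn n → ℂ}
    (hf : A2mem Ω f) :
    ∫ ζ in Ω, f ζ * conj (bz K z ζ) = f z / (Real.sqrt (K z z).re : ℂ) := by
  simp only [bz, integral_mul_conj_div_ofReal]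
  rw [← hK.2 f hf z hz]

lemma bz_self (hK : IsBergmanKernel Ω K) (hz : z ∈ Ω) :
    bz K z z = (Real.sqrt (K z z).re : ℂ) := by
  have hKzz := hK.apply_self_eq_integral hz
  rw [bz, hKzz, ofReal_re, ← ofReal_div, Real.div_sqrt]

lemma integral_mul_conj_bz_eq_zero (hK : IsBergmanKernel Ω K) (hz : z ∈ Ω) {X : Cn n} {h : Cn n → ℂ}
    (hh : SzX Ω z X h) : ∫ ζ in Ω, h ζ * conj (bz K z ζ) = 0 := by
  rw [hK.integral_mul_conj_bz hz hh.1, hh.2.1, zero_div]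

lemma bz_self_ne_zero (hK : IsBergmanKernel Ω K) (hΩo : IsOpen Ω)
    (hΩb : Bornology.IsBounded Ω) (hz : z ∈ Ω) : bz K z z ≠ 0 := by
  rw [hK.bz_self hz, ofReal_ne_zero]
  exact (Real.sqrt_pos.mpr (hK.re_apply_self_pos hΩo hΩb hz)).ne'

lemma integral_bz_mul_conj_bz (hK : IsBergmanKernel Ω K) (hΩo : IsOpen Ω)
    (hΩb : Bornology.IsBounded Ω) (hz : z ∈ Ω) :
    ∫ ζ in Ω, bz K z ζ * conj (bz K z ζ) = 1 := by
  rw [hK.integral_mul_conj_bz hz (hK.a2mem_bz hz), ← hK.bz_self hz]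
  exact div_self (hK.bz_self_ne_zero hΩo hΩb hz)

end IsBergmanKernel

section Caratheodory

variable {n : ℕ} {Ω : Set (Cn n)} {z : Cn n}

lemma le_caraMetric (hΩo : IsOpen Ω) (hz : z ∈ Ω) {f : Cn n → ℂ}
    (hfd : DifferentiableOn ℂ f Ω) (hf0 : f z = 0) (hf1 : ∀ ζ ∈ Ω, ‖f ζ‖ < 1) (X : Cn n) :
    ‖fderiv ℂ f z X‖ ≤ CaraMetric Ω z X := by
  obtain ⟨r, hr, hball⟩ := Metric.isOpen_iff.mp hΩo z hz
  refine le_csSup ⟨‖X‖ / r, ?_⟩ ⟨f, hfd, hf0, hf1, rfl⟩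
  rintro _ ⟨g, hgd, hg0, hg1, rfl⟩
  have hmaps : Set.MapsTo g (ball z r) (closedBall (g z) 1) := fun ζ hζ => by
    rw [hg0, mem_closedBall_zero_iff]
    exact (hg1 ζ (hball hζ)).le
  calc ‖fderiv ℂ g z X‖ ≤ ‖fderiv ℂ g z‖ * ‖X‖ := (fderiv ℂ g z).le_opNorm X
    _ ≤ 1 / r * ‖X‖ := by
      gcongr
      exact Complex.norm_fderiv_le_div_of_mapsTo_ball (hgd.mono hball) hmaps hr
    _ = ‖X‖ / r := by ring

lemma caraMetric_pos (hΩo : IsOpen Ω) (hΩb : Bornology.IsBounded Ω) (hz : z ∈ Ω)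
    {X : Cn n} (hX : X ≠ 0) : 0 < CaraMetric Ω z X := by
  obtain ⟨R, hR⟩ := hΩb.subset_closedBall z
  have hR0 : 0 ≤ R := by simpa using hR hz
  set M : ℝ := ‖X‖ * R + 1
  have hM : 0 < M := by positivity
  set L : Cn n →L[ℂ] ℂ := (M : ℂ)⁻¹ • innerSL ℂ X
  have hL_apply : ∀ v, ‖L v‖ = ‖inner ℂ X v‖ / M := fun v => by
    simp [L, norm_inv, abs_of_pos hM, div_eq_inv_mul]
  have hL1 : ∀ ζ ∈ Ω, ‖L ζ - L z‖ < 1 := fun ζ hζ => by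
    rw [← map_sub, hL_apply, div_lt_one hM]
    calc ‖inner ℂ X (ζ - z)‖ ≤ ‖X‖ * ‖ζ - z‖ := norm_inner_le_norm X _
      _ ≤ ‖X‖ * R := by gcongr; simpa [dist_eq_norm] using hR hζ
      _ < M := lt_add_one _
  have hLX : 0 < ‖L X‖ := by
    rw [hL_apply, inner_self_eq_norm_sq_to_K, norm_pow, RCLike.norm_ofReal, abs_norm]
    exact div_pos (pow_pos (norm_pos_iff.mpr hX) 2) hM
  have hderiv : fderiv ℂ (fun ζ => L ζ - L z) z = L := (L.hasFDerivAt.sub_const (L z)).fderiv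
  have := le_caraMetric hΩo hz (L.differentiable.sub_const (L z)).differentiableOn
    (sub_self _) hL1 X
  rw [hderiv] at this
  exact hLX.trans_le this

end Caratheodory

section FDeriv

variable {𝕜 E : Type*} [NontriviallyNormedField 𝕜] [NormedAddCommGroup E] [NormedSpace 𝕜 E]
  {f g : E → 𝕜} {z : E}

lemma fderiv_mul_apply_of_right_eq_zero (hf : DifferentiableAt 𝕜 f z)
    (hg : DifferentiableAt 𝕜 g z) (hgz : g z = 0) (v : E) :
    fderiv 𝕜 (fun x => f x * g x) z v = f z * fderiv 𝕜 g z v := by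
  simp [fderiv_fun_mul hf hg, hgz]

lemma fderiv_div_const_apply (hf : DifferentiableAt 𝕜 f z) (a : 𝕜) (v : E) :
    fderiv 𝕜 (fun x => f x / a) z v = fderiv 𝕜 f z v / a := by
  simp only [div_eq_mul_inv, fderiv_mul_const hf, smul_apply, smul_eq_mul, mul_comm]

end FDeriv

namespace IsProj

variable {n : ℕ} {Ω : Set (Cn n)} {z X : Cn n} {g p : Cn n → ℂ}

lemma apply_eq (hp : IsProj Ω z X g p) : p z = g z :=
  (sub_eq_zero.mp hp.2.2.2.1).symm

lemma fderiv_apply_eq (hp : IsProj Ω z X g p) (hΩo : IsOpen Ω) (hz : z ∈ Ω)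
    (hg : DifferentiableAt ℂ g z) : fderiv ℂ p z X = fderiv ℂ g z X := by
  have h := hp.2.2.2.2
  rw [fderiv_sub hg (hp.1.differentiableAt hΩo hz), sub_apply, sub_eq_zero] at h
  exact h.symm

end IsProj

section Span

variable {n : ℕ} {Ω : Set (Cn n)} {z X : Cn n} {f g₀ g₁ : Cn n → ℂ}

lemma exists_sub_mem_szX (hΩo : IsOpen Ω) (hz : z ∈ Ω) (hg₀ : A2mem Ω g₀) (hg₀z : g₀ z ≠ 0)
    (hg₁ : A2mem Ω g₁) (hg₁z : g₁ z = 0) (hg₁X : fderiv ℂ g₁ z X ≠ 0) (hf : A2mem Ω f) :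
    ∃ a b : ℂ, SzX Ω z X (fun ζ => f ζ - a * g₀ ζ - b * g₁ ζ) := by
  have hd : ∀ {u : Cn n → ℂ}, A2mem Ω u → DifferentiableAt ℂ u z :=
    fun hu => hu.differentiableAt hΩo hz
  set a := f z / g₀ z
  set b := (fderiv ℂ f z X - a * fderiv ℂ g₀ z X) / fderiv ℂ g₁ z X
  refine ⟨a, b, (hf.sub (hg₀.const_mul a)).sub (hg₁.const_mul b), ?_, ?_⟩
  · simp [a, hg₁z, div_mul_cancel₀ _ hg₀z]
  · rw [fderiv_fun_sub ((hd hf).fun_sub ((hd hg₀).const_mul a)) ((hd hg₁).const_mul b),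
      fderiv_fun_sub (hd hf) ((hd hg₀).const_mul a), fderiv_const_mul (hd hg₀),
      fderiv_const_mul (hd hg₁)]
    simp only [sub_apply, smul_apply, smul_eq_mul, b,
      div_mul_cancel₀ _ hg₁X, sub_self]

lemma exists_eqOn_add_of_perp_szX (hΩo : IsOpen Ω) (hz : z ∈ Ω)
    (hg₀ : A2mem Ω g₀) (hg₀z : g₀ z ≠ 0)
    (hg₀S : ∀ h, SzX Ω z X h → ∫ ζ in Ω, h ζ * conj (g₀ ζ) = 0)
    (hg₁ : A2mem Ω g₁) (hg₁z : g₁ z = 0) (hg₁X : fderiv ℂ g₁ z X ≠ 0)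
    (hg₁S : ∀ h, SzX Ω z X h → ∫ ζ in Ω, h ζ * conj (g₁ ζ) = 0)
    (hf : A2mem Ω f) (hfS : ∀ h, SzX Ω z X h → ∫ ζ in Ω, f ζ * conj (h ζ) = 0) :
    ∃ a b : ℂ, ∀ ζ ∈ Ω, f ζ = a * g₀ ζ + b * g₁ ζ := by
  obtain ⟨a, b, hr⟩ := exists_sub_mem_szX hΩo hz hg₀ hg₀z hg₁ hg₁z hg₁X hf
  have hrr : ∫ ζ in Ω, (f ζ - a * g₀ ζ - b * g₁ ζ) * conj (f ζ - a * g₀ ζ - b * g₁ ζ) = 0 := by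
    rw [integral_sub_mul_sub_mul_mul_conj hf.2 hg₀.2 hg₁.2 hr.1.2, hfS _ hr,
      integral_mul_conj_eq_conj g₀, hg₀S _ hr, integral_mul_conj_eq_conj g₁, hg₁S _ hr]
    simp
  refine ⟨a, b, fun ζ hζ => ?_⟩
  have hr0 : f ζ - a * g₀ ζ - b * g₁ ζ = 0 :=
    hr.1.eqOn_zero_of_integral_mul_conj_self_eq_zero hΩo hrr hζ
  linear_combination hr0

end Span

theorem stmt_6_general {n : ℕ} (Ω : Set (Cn n)) (hΩo : IsOpen Ω)
    (hΩb : Bornology.IsBounded Ω)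
    (K : Cn n → Cn n → ℂ) (hK : IsBergmanKernel Ω K)
    (z : Cn n) (hz : z ∈ Ω) (X : Cn n) (hX : X ≠ 0)
    (c : Cn n → ℂ) (hc : IsCaraExtremal Ω z X c)
    (p : Cn n → ℂ) (hp : IsProj Ω z X (fun ζ => bz K z ζ * c ζ) p) :
    letI h₁ : Cn n → ℂ := fun ζ => p ζ / (L2norm Ω p : ℂ)
    -- b_z and h₁ lie in S_{z,X}^⊥ :
    (∀ h, SzX Ω z X h → (∫ ζ in Ω, h ζ * conj (bz K z ζ)) = 0) ∧
    (∀ h, SzX Ω z X h → (∫ ζ in Ω, h ζ * conj (h₁ ζ)) = 0) ∧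
    -- {b_z, h₁} is orthonormal:
    (∫ ζ in Ω, bz K z ζ * conj (bz K z ζ)) = 1 ∧
    (∫ ζ in Ω, h₁ ζ * conj (h₁ ζ)) = 1 ∧
    (∫ ζ in Ω, bz K z ζ * conj (h₁ ζ)) = 0 ∧
    -- {b_z, h₁} spans S_{z,X}^⊥, so that it has complex dimension 2:
    (∀ f, A2mem Ω f → (∀ h, SzX Ω z X h → (∫ ζ in Ω, f ζ * conj (h ζ)) = 0) →
      ∃ a b : ℂ, ∀ ζ ∈ Ω, f ζ = a * bz K z ζ + b * h₁ ζ) := by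
  beta_reduce
  obtain ⟨hc_on, hcz, -, hcX⟩ := hc
  have hbz := hK.a2mem_bz hz
  have hc_at : DifferentiableAt ℂ c z := hc_on.differentiableAt (hΩo.mem_nhds hz)
  have hh₁S : ∀ h, SzX Ω z X h → ∫ ζ in Ω, h ζ * conj (p ζ / (L2norm Ω p : ℂ)) = 0 :=
    fun h hh => by rw [integral_mul_conj_div_ofReal, hp.2.1 h hh, zero_div]
  have hpz : p z = 0 := by rw [hp.apply_eq, hcz, mul_zero]
  have hpX : fderiv ℂ p z X = bz K z z * CaraMetric Ω z X := by
    rw [hp.fderiv_apply_eq hΩo hz ((hbz.differentiableAt hΩo hz).mul hc_at),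
      fderiv_mul_apply_of_right_eq_zero (hbz.differentiableAt hΩo hz) hc_at hcz, hcX]
  have hpX0 : fderiv ℂ p z X ≠ 0 := by
    rw [hpX]
    exact mul_ne_zero (hK.bz_self_ne_zero hΩo hΩb hz)
      (ofReal_ne_zero.mpr (caraMetric_pos hΩo hΩb hz hX).ne')
  have hp_pos := hp.1.integral_norm_sq_pos_of_fderiv_ne_zero hΩo hz hpX0
  have hh₁X : fderiv ℂ (fun ζ => p ζ / (L2norm Ω p : ℂ)) z X ≠ 0 := by
    rw [fderiv_div_const_apply (hp.1.differentiableAt hΩo hz)]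
    exact div_ne_zero hpX0 (ofReal_ne_zero.mpr (Real.sqrt_pos.mpr hp_pos).ne')
  refine ⟨fun h => hK.integral_mul_conj_bz_eq_zero hz, hh₁S,
    hK.integral_bz_mul_conj_bz hΩo hΩb hz, integral_div_L2norm_mul_conj_self hp_pos, ?_,
    fun f hf hfS => ?_⟩
  · rw [integral_mul_conj_div_ofReal, integral_mul_conj_eq_conj,
      hK.integral_mul_conj_bz hz hp.1, hpz, zero_div, map_zero, zero_div]
  · exact exists_eqOn_add_of_perp_szX hΩo hz hbz (hK.bz_self_ne_zero hΩo hΩb hz)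
      (fun h => hK.integral_mul_conj_bz_eq_zero hz) (hp.1.div_const _) (by simp [hpz]) hh₁X
      hh₁S hf hfS

/-- `S_{z,X}^⊥` is 2-dimensional with orthonormal basis
`{b_z, h₁}`, where `h₁ = P_{z,X}(b_z c_{z,X})/‖P_{z,X}(b_z c_{z,X})‖`. -/
theorem stmt_6 {n : ℕ} (Ω : Set (Cn n)) (hΩo : IsOpen Ω) (hΩc : IsConnected Ω)
    (hΩb : Bornology.IsBounded Ω)
    (K : Cn n → Cn n → ℂ) (hK : IsBergmanKernel Ω K)
    (z : Cn n) (hz : z ∈ Ω) (X : Cn n) (hX : X ≠ 0)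
    (c : Cn n → ℂ) (hc : IsCaraExtremal Ω z X c)
    (p : Cn n → ℂ) (hp : IsProj Ω z X (fun ζ => bz K z ζ * c ζ) p) :
    letI h₁ : Cn n → ℂ := fun ζ => p ζ / (L2norm Ω p : ℂ)
    -- b_z and h₁ lie in S_{z,X}^⊥ :
    (∀ h, SzX Ω z X h → (∫ ζ in Ω, h ζ * conj (bz K z ζ)) = 0) ∧
    (∀ h, SzX Ω z X h → (∫ ζ in Ω, h ζ * conj (h₁ ζ)) = 0) ∧
    -- {b_z, h₁} is orthonormal:
    (∫ ζ in Ω, bz K z ζ * conj (bz K z ζ)) = 1 ∧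
    (∫ ζ in Ω, h₁ ζ * conj (h₁ ζ)) = 1 ∧
    (∫ ζ in Ω, bz K z ζ * conj (h₁ ζ)) = 0 ∧
    -- {b_z, h₁} spans S_{z,X}^⊥, so that it has complex dimension 2:
    (∀ f, A2mem Ω f → (∀ h, SzX Ω z X h → (∫ ζ in Ω, f ζ * conj (h ζ)) = 0) →
      ∃ a b : ℂ, ∀ ζ ∈ Ω, f ζ = a * bz K z ζ + b * h₁ ζ) :=
  stmt_6_general Ω hΩo hΩb K hK z hz X hX c hc p hp
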